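/- arXiv:1306.0400 — 8 statements merged into one kernel-verified Lean document; each statement's English description precedes it below -/
import Mathlib

section
/- Let a, b be natural numbers with SET(a) = SET(b), where SET(x) = 2^(bitlength x) - 1 (and SET(0)=0). Then a ≤ b if and only if (a + ¬b) AND (SET(b) + 1) = 0, where ¬b = SET(b) - b and AND denotes bitwise conjunction. -/
/-- `SET a = 2^L - 1` where `L = Nat.size a` is the least `L` with `a < 2^L`. -/
def SET (a : ℕ) : ℕ := 2 ^ Nat.size a - 1

theorem le_iff_land_eq_zero (a b : ℕ) (h : SET a = SET b) :
    a ≤ b ↔ (a + (SET b - b)) &&& (SET b + 1) = 0 := by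
  have hsz : Nat.size a = Nat.size b := by
    have := h
    unfold SET at this
    have h1 : 2 ^ Nat.size a = 2 ^ Nat.size b := by
      have ha := Nat.one_le_two_pow (n := Nat.size a)
      have hb := Nat.one_le_two_pow (n := Nat.size b)
      omega
    exact Nat.pow_right_injective (le_refl 2) h1
  set L := Nat.size b with hL
  have hb : b < 2 ^ L := Nat.lt_size_self b
  have ha : a < 2 ^ L := hsz ▸ Nat.lt_size_self a
  have hS : SET b = 2 ^ L - 1 := rfl
  have hS1 : SET b + 1 = 2 ^ L := by
    have : 1 ≤ 2 ^ L := Nat.one_le_two_pow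
    omega
  rw [hS1, hS, Nat.and_two_pow]
  have hlt : a + (2 ^ L - 1 - b) < 2 ^ (L + 1) := by
    have : 2 ^ (L + 1) = 2 ^ L * 2 := by ring
    omega
  constructor
  · intro hab
    have : a + (2 ^ L - 1 - b) < 2 ^ L := by omega
    have ht : (a + (2 ^ L - 1 - b)).testBit L = false := by
      exact Nat.testBit_lt_two_pow this
    simp [ht]
  · intro heq
    by_contra hab
    push_neg at hab
    have hge : 2 ^ L ≤ a + (2 ^ L - 1 - b) := by omega
    have ht : (a + (2 ^ L - 1 - b)).testBit L = true := by
      have := Nat.testBit_eq_decide_div_mod_eq (x := a + (2 ^ L - 1 - b)) (i := L)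
      rw [this]
      have h2 : (a + (2 ^ L - 1 - b)) / 2 ^ L = 1 := by
        apply Nat.div_eq_of_lt_le (by omega)
        have : (1 + 1) * 2 ^ L = 2 ^ (L + 1) := by ring
        omega
      simp [h2]
    rw [ht] at heq
    simp at heq
end

section
/- Let a, b be natural numbers with b < a, and let c = b + SET(a), where SET(a) = 2^L - 1 with L the bit-length of a. Then a - b = (a + ¬c) AND SET(a), where ¬c = SET(c) - c denotes tweaked bitwise negation and AND is bitwise conjunction. -/
/-- Tweaked bitwise negation. -/
def tneg (a : ℕ) : ℕ := SET a - a

/-!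
Write `L = Nat.size a`, so that `SET a = 2^L - 1` and `x &&& SET a = x % 2^L`.
For `0 < b < a` the number `c = b + (2^L - 1)` lies in `[2^L, 2^(L+1))`, so `SET c = 2^(L+1) - 1`
and `¬c = 2^L - b`: adding it to `a` gives `(a - b) + 2^L`, which is `a - b` modulo `2^L`.
For `b = 0` we have `c = SET a`, so `¬c = 0` and the right-hand side is `a % 2^L = a`.
-/

namespace Nat

theorem size_eq_succ_of_two_pow_le_of_lt {n L : ℕ} (h₁ : 2 ^ L ≤ n) (h₂ : n < 2 ^ (L + 1)) :
    n.size = L + 1 :=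
  le_antisymm (size_le.2 h₂) (lt_size.2 h₁)

theorem size_two_pow_sub_one (L : ℕ) : (2 ^ L - 1).size = L := by
  cases L with
  | zero => rfl
  | succ k =>
    have : 1 ≤ 2 ^ k := Nat.one_le_two_pow
    exact size_eq_succ_of_two_pow_le_of_lt (by rw [pow_succ]; omega) (by omega)

end Nat

theorem land_SET_eq_mod (n a : ℕ) : n &&& SET a = n % 2 ^ a.size :=
  Nat.and_two_pow_sub_one_eq_mod n a.size

theorem tneg_two_pow_sub_one (L : ℕ) : tneg (2 ^ L - 1) = 0 := by
  rw [tneg, SET, Nat.size_two_pow_sub_one, Nat.sub_self]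

theorem tneg_add_two_pow_sub_one {b L : ℕ} (hb₀ : 0 < b) (hb : b ≤ 2 ^ L) :
    tneg (b + (2 ^ L - 1)) = 2 ^ L - b := by
  have hsize : (b + (2 ^ L - 1)).size = L + 1 :=
    Nat.size_eq_succ_of_two_pow_le_of_lt (by omega) (by rw [pow_succ]; omega)
  rw [tneg, SET, hsize, pow_succ]
  omega

theorem sub_eq_add_tneg_land (a b : ℕ) (h : b < a) :
    a - b = (a + tneg (b + SET a)) &&& SET a := by
  have ha : a < 2 ^ a.size := Nat.lt_size_self a
  rw [land_SET_eq_mod]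
  rcases Nat.eq_zero_or_pos b with rfl | hb
  · rw [zero_add, SET, tneg_two_pow_sub_one, add_zero, Nat.sub_zero, Nat.mod_eq_of_lt ha]
  · rw [SET, tneg_add_two_pow_sub_one hb (by omega),
      show a + (2 ^ a.size - b) = a - b + 2 ^ a.size by omega, Nat.add_mod_right,
      Nat.mod_eq_of_lt (by omega)]
end

section
/- Let m, n be positive naturals and let k : Fin n → ℕ satisfy k i < 2^m for all i. Define V = Σ_{i<n} 2^{m·i} · k i. Then for each i, k i = (V >>> (m·i)) AND (2^m - 1); that is, vector encoding of elements of width m is injectively decodable by shifting and masking. -/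
/-! Write `B = 2 ^ m`. Shifting by `m * i` and masking with `2 ^ m - 1` are division by `B ^ i`
and reduction mod `B`, so the claim is that base-`B` digits can be read off: the digits
below position `i` contribute less than `B ^ i`, and those above it a multiple of `B ^ (i + 1)`. -/

namespace Nat

variable {B : ℕ}

theorem sum_fin_pow_mul_lt {n : ℕ} (d : Fin n → ℕ) (hd : ∀ j, d j < B) :
    ∑ j : Fin n, B ^ (j : ℕ) * d j < B ^ n := by
  induction n with
  | zero => simp
  | succ n ih =>
    rw [Fin.sum_univ_castSucc]
    calc ∑ j : Fin n, B ^ (j : ℕ) * d j.castSucc + B ^ n * d (Fin.last n)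
        < B ^ n + B ^ n * d (Fin.last n) := by
          simpa using ih (fun j => d j.castSucc) fun j => hd _
      _ = B ^ n * (d (Fin.last n) + 1) := by ring
      _ ≤ B ^ n * B := Nat.mul_le_mul_left _ (hd _)
      _ = B ^ (n + 1) := (pow_succ B n).symm

theorem sum_fin_pow_mul_div_pow_mod {n : ℕ} (d : Fin n → ℕ) (hd : ∀ j, d j < B) (i : Fin n) :
    (∑ j : Fin n, B ^ (j : ℕ) * d j) / B ^ (i : ℕ) % B = d i := by
  have hB : 0 < B := (Nat.zero_le _).trans_lt (hd i)
  induction n with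
  | zero => exact i.elim0
  | succ n ih =>
    rw [Fin.sum_univ_castSucc]
    simp only [Fin.val_castSucc, Fin.val_last]
    induction i using Fin.lastCases with
    | last =>
      have hlow := sum_fin_pow_mul_lt (fun j => d j.castSucc) fun j => hd _
      rw [Fin.val_last, Nat.add_mul_div_left _ _ (pow_pos hB n), Nat.div_eq_of_lt hlow,
        zero_add, Nat.mod_eq_of_lt (hd _)]
    | cast i =>
      have hsplit : B ^ n * d (Fin.last n) =
          B ^ (i : ℕ) * (B * (B ^ (n - i - 1) * d (Fin.last n))) := by
        rw [← mul_assoc, ← mul_assoc, ← pow_succ, ← pow_add]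
        congr 2
        omega
      rw [hsplit, Fin.val_castSucc, Nat.add_mul_div_left _ _ (pow_pos hB _),
        Nat.add_mul_mod_self_left]
      exact ih (fun j => d j.castSucc) (fun j => hd _) i

end Nat

theorem vector_decode_general (m n : ℕ)
    (k : Fin n → ℕ) (hk : ∀ i, k i < 2 ^ m) (i : Fin n) :
    k i = ((∑ j : Fin n, 2 ^ (m * (j : ℕ)) * k j) >>> (m * (i : ℕ))) &&& (2 ^ m - 1) := by
  rw [Nat.and_two_pow_sub_one_eq_mod, Nat.shiftRight_eq_div_pow]
  simp only [pow_mul]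
  exact (Nat.sum_fin_pow_mul_div_pow_mod k hk i).symm

theorem vector_decode (m n : ℕ) (hm : 0 < m) (hn : 0 < n)
    (k : Fin n → ℕ) (hk : ∀ i, k i < 2 ^ m) (i : Fin n) :
    k i = ((∑ j : Fin n, 2 ^ (m * (j : ℕ)) * k j) >>> (m * (i : ℕ))) &&& (2 ^ m - 1) :=
  vector_decode_general m n k hk i
end

section
/- Let I and w encode a valid map domain, i.e., any two 1-bits of I are at least w bit positions apart, with w ≥ 1. Define MASK(I,w) = (I <<< w) - I. Then for every bit position p, MASK(I,w) has a 1 at position p if and only if there exists a 1-bit of I at some position q with q ≤ p < q + w. -/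
/-!
Since `(I <<< w) - I = (2 ^ w - 1) * I`, every 1-bit `q` of `I` contributes the block of `w` ones
`2 ^ q * (2 ^ w - 1)` at positions `q, …, q + w - 1`, and sparseness makes these blocks disjoint, so
no carries occur. Inductively: peeling off the lowest 1-bit writes a nonzero sparse `I` as
`2 ^ k * (2 ^ w * J + 1)` with `J` sparse, and both sides of the claim obey the same recursion
along this decomposition.
-/

/-- `I` is `w`-sparse: any two 1-bits of `I` are at least `w` positions apart. -/
def Sparse (I w : ℕ) : Prop :=
  ∀ p q : ℕ, I.testBit p → I.testBit q → p < q → p + w ≤ q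

def Covered (I w p : ℕ) : Prop :=
  ∃ q : ℕ, I.testBit q ∧ q ≤ p ∧ p < q + w

theorem covered_zero (w p : ℕ) : ¬ Covered 0 w p := by
  simp [Covered]

theorem covered_two_pow_mul {I w k p : ℕ} :
    Covered (2 ^ k * I) w p ↔ k ≤ p ∧ Covered I w (p - k) := by
  simp only [Covered, Nat.testBit_two_pow_mul, Bool.and_eq_true, decide_eq_true_eq]
  constructor
  · rintro ⟨q, ⟨hkq, hq⟩, hqp, hpq⟩
    exact ⟨by omega, q - k, hq, by omega, by omega⟩
  · rintro ⟨hkp, q, hq, hqp, hpq⟩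
    exact ⟨q + k, ⟨by omega, by simpa using hq⟩, by omega, by omega⟩

theorem testBit_two_pow_mul_add_one {J w : ℕ} (hw : 1 ≤ w) (q : ℕ) :
    (2 ^ w * J + 1).testBit q ↔ q = 0 ∨ w ≤ q ∧ J.testBit (q - w) := by
  rw [Nat.testBit_two_pow_mul_add _ (Nat.one_lt_two_pow (by omega))]
  split_ifs with hq
  · rw [Nat.testBit_one_eq_true_iff_self_eq_zero]
    omega
  · have hq0 : q ≠ 0 := by omega
    simp [hq0, not_lt.mp hq]

theorem covered_two_pow_mul_add_one {J w p : ℕ} (hw : 1 ≤ w) :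
    Covered (2 ^ w * J + 1) w p ↔ p < w ∨ w ≤ p ∧ Covered J w (p - w) := by
  simp only [Covered, testBit_two_pow_mul_add_one hw]
  constructor
  · rintro ⟨q, rfl | ⟨hwq, hq⟩, hqp, hpq⟩
    · omega
    · exact .inr ⟨by omega, q - w, hq, by omega, by omega⟩
  · rintro (hpw | ⟨hwp, q, hq, hqp, hpq⟩)
    · exact ⟨0, .inl rfl, by omega, by omega⟩
    · exact ⟨q + w, .inr ⟨by omega, by simpa using hq⟩, by omega, by omega⟩

theorem testBit_mul_two_pow_mul {c k m p : ℕ} :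
    (c * (2 ^ k * m)).testBit p ↔ k ≤ p ∧ (c * m).testBit (p - k) := by
  rw [mul_left_comm, Nat.testBit_two_pow_mul]
  simp

theorem testBit_two_pow_sub_one_mul_two_pow_mul_add_one {J w p : ℕ} :
    ((2 ^ w - 1) * (2 ^ w * J + 1)).testBit p ↔
      p < w ∨ w ≤ p ∧ ((2 ^ w - 1) * J).testBit (p - w) := by
  have hsplit : (2 ^ w - 1) * (2 ^ w * J + 1) = 2 ^ w * ((2 ^ w - 1) * J) + (2 ^ w - 1) := by
    ring
  rw [hsplit, Nat.testBit_two_pow_mul_add _ (Nat.sub_lt (Nat.two_pow_pos w) one_pos),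
    Nat.testBit_two_pow_sub_one]
  split_ifs with hp
  · simp [hp]
  · simp [hp, not_lt.mp hp]

namespace Sparse

variable {I w : ℕ}

theorem of_two_pow_mul {k : ℕ} (h : Sparse (2 ^ k * I) w) : Sparse I w := by
  intro p q hp hq hpq
  have := h (p + k) (q + k) (by simpa [Nat.testBit_two_pow_mul] using hp)
    (by simpa [Nat.testBit_two_pow_mul] using hq) (by omega)
  omega

theorem div_two_pow (h : Sparse I w) (k : ℕ) : Sparse (I / 2 ^ k) w := by
  intro p q hp hq hpq
  rw [Nat.testBit_div_two_pow] at hp hq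
  have := h _ _ hp hq (by omega)
  omega

theorem mod_two_pow_eq_one (h : Sparse I w) (hw : 1 ≤ w) (hodd : Odd I) : I % 2 ^ w = 1 := by
  have h0 : I.testBit 0 := by simp [Nat.testBit_zero, Nat.odd_iff.mp hodd]
  apply Nat.eq_of_testBit_eq
  intro j
  rw [Bool.eq_iff_iff, Nat.testBit_one_eq_true_iff_self_eq_zero, Nat.testBit_mod_two_pow,
    Bool.and_eq_true, decide_eq_true_eq]
  constructor
  · rintro ⟨hjw, hj⟩
    by_contra hj0
    have := h 0 j h0 hj (by omega)
    omega
  · rintro rfl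
    exact ⟨hw, h0⟩

theorem exists_eq_two_pow_mul (h : Sparse I w) (hw : 1 ≤ w) (hI : I ≠ 0) :
    ∃ k J, I = 2 ^ k * (2 ^ w * J + 1) ∧ Sparse J w := by
  obtain ⟨k, m, hodd, rfl⟩ := Nat.exists_eq_two_pow_mul_odd hI
  have hm := h.of_two_pow_mul
  refine ⟨k, m / 2 ^ w, ?_, hm.div_two_pow w⟩
  rw [← hm.mod_two_pow_eq_one hw hodd, Nat.div_add_mod]

theorem testBit_two_pow_sub_one_mul (h : Sparse I w) (hw : 1 ≤ w) (p : ℕ) :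
    ((2 ^ w - 1) * I).testBit p ↔ Covered I w p := by
  induction I using Nat.strong_induction_on generalizing p with
  | _ I ih =>
    rcases eq_or_ne I 0 with rfl | hI
    · simp [covered_zero]
    obtain ⟨k, J, rfl, hJ⟩ := h.exists_eq_two_pow_mul hw hI
    have hJlt : J < 2 ^ k * (2 ^ w * J + 1) :=
      calc J < 2 ^ w * J + 1 := by nlinarith [Nat.one_le_two_pow (n := w)]
        _ ≤ 2 ^ k * (2 ^ w * J + 1) := Nat.le_mul_of_pos_left _ (Nat.two_pow_pos k)
    rw [testBit_mul_two_pow_mul, testBit_two_pow_sub_one_mul_two_pow_mul_add_one,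
      covered_two_pow_mul, covered_two_pow_mul_add_one hw, ih J hJlt hJ]

end Sparse

theorem mask_testBit (I w : ℕ) (hw : 1 ≤ w) (hI : Sparse I w) (p : ℕ) :
    ((I <<< w) - I).testBit p ↔ ∃ q : ℕ, I.testBit q ∧ q ≤ p ∧ p < q + w := by
  rw [Nat.shiftLeft_eq, mul_comm, ← Nat.sub_one_mul]
  exact hI.testBit_two_pow_sub_one_mul hw p
end

section
/- Let I be w-sparse (any two 1-bits at least w positions apart, w ≥ 2) with 1-bits at positions ind_1 < ind_2 < ... < ind_h, and let elements k_i, k'_i < 2^{w-1} for each i. Let V = Σ_i k_i <<< ind_i and U = Σ_i k'_i <<< ind_i. Then the element-wise sum (V + U) restricted by AND with MASK(I,w) = (I <<< w) - I decodes at index ind_i to (k_i + k'_i) mod 2^w; in particular if k_i + k'_i < 2^w for all i, then V + U = Σ_i (k_i + k'_i) <<< ind_i and the additions do not interfere across elements. -/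
/-!
Write the sum as `L + v i * 2 ^ ind i + R`, splitting off the blocks below and above position
`ind i`. Each lower block fits in its `w` bits and the blocks are `w` apart, so `L < 2 ^ ind i`
(carries never leave a block); every upper block is a multiple of `2 ^ (ind i + w)`. Shifting by
`ind i` and masking with `2 ^ w - 1` therefore reads off `v i % 2 ^ w`. Element-wise sums of
values below `2 ^ (w - 1)` stay below `2 ^ w`, and encoding is additive.
-/

open Finset

/-- The paper's `w`-sparse domain, given by the positions `ind j` of its 1-bits. -/
def SparseOn {ι : Type*} (w : ℕ) (ind : ι → ℕ) (s : Set ι) : Prop :=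
  s.Pairwise fun i j => ind i + w ≤ ind j ∨ ind j + w ≤ ind i

theorem sum_mul_two_pow_lt {ι : Type*} [DecidableEq ι] {w n : ℕ} {ind v : ι → ℕ} {s : Finset ι}
    (hs : SparseOn w ind s) (hv : ∀ j ∈ s, v j < 2 ^ w) (hn : ∀ j ∈ s, ind j + w ≤ n) :
    ∑ j ∈ s, v j * 2 ^ ind j < 2 ^ n := by
  induction s using Finset.induction_on_max_value ind generalizing n with
  | empty => simp
  | insert a s has hmax ih =>
    simp only [SparseOn, coe_insert, Set.pairwise_insert] at hs
    have hlt : ∑ j ∈ s, v j * 2 ^ ind j < 2 ^ ind a := by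
      refine ih hs.1 (fun j hj => hv j (mem_insert_of_mem hj)) fun j hj => ?_
      have := hmax j hj
      have := (hs.2 j hj (ne_of_mem_of_not_mem hj has).symm).1
      omega
    have hva : v a + 1 ≤ 2 ^ w := hv a (mem_insert_self a s)
    rw [sum_insert has]
    calc v a * 2 ^ ind a + ∑ j ∈ s, v j * 2 ^ ind j
        < (v a + 1) * 2 ^ ind a := by linarith
      _ ≤ 2 ^ w * 2 ^ ind a := Nat.mul_le_mul_right _ hva
      _ = 2 ^ (ind a + w) := by rw [pow_add, mul_comm]
      _ ≤ 2 ^ n := Nat.pow_le_pow_right two_pos (hn a (mem_insert_self a s))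

theorem shiftRight_and_two_pow_sub_one {L v R a w : ℕ} (hL : L < 2 ^ a) (hR : 2 ^ (a + w) ∣ R) :
    (L + v * 2 ^ a + R) >>> a &&& (2 ^ w - 1) = v % 2 ^ w := by
  obtain ⟨c, rfl⟩ := hR
  have hsplit : L + v * 2 ^ a + 2 ^ (a + w) * c = L + (v + 2 ^ w * c) * 2 ^ a := by ring
  rw [hsplit, Nat.shiftRight_eq_div_pow, Nat.and_two_pow_sub_one_eq_mod,
    Nat.add_mul_div_right _ _ (Nat.two_pow_pos a), Nat.div_eq_of_lt hL, zero_add,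
    Nat.add_mul_mod_self_left]

theorem sum_shiftLeft_shiftRight_and {ι : Type*} [DecidableEq ι] {w : ℕ} {ind v : ι → ℕ}
    {s : Finset ι} {i : ι} (hs : SparseOn w ind s) (hi : i ∈ s)
    (hv : ∀ j ∈ s, ind j < ind i → v j < 2 ^ w) :
    (∑ j ∈ s, v j <<< ind j) >>> ind i &&& (2 ^ w - 1) = v i % 2 ^ w := by
  have hsparse : ∀ j ∈ s, j ≠ i → ind j + w ≤ ind i ∨ ind i + w ≤ ind j :=
    fun j hj hji => hs hj hi hji
  set below := s.filter (fun j => ind j < ind i)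
  set above := (s.filter (fun j => ¬ ind j < ind i)).erase i
  have hi_above : i ∈ s.filter (fun j => ¬ ind j < ind i) := mem_filter.2 ⟨hi, lt_irrefl _⟩
  have hsum : ∑ j ∈ s, v j <<< ind j =
      ∑ j ∈ below, v j * 2 ^ ind j + v i * 2 ^ ind i + ∑ j ∈ above, v j * 2 ^ ind j := by
    simp only [Nat.shiftLeft_eq]
    rw [← sum_filter_add_sum_filter_not s (fun j => ind j < ind i), ← add_sum_erase _ _ hi_above,
      add_assoc]
  have hbelow : ∑ j ∈ below, v j * 2 ^ ind j < 2 ^ ind i := by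
    refine sum_mul_two_pow_lt (Set.Pairwise.mono (coe_subset.2 (filter_subset _ _)) hs) ?_ ?_
    · intro j hj
      exact hv j (mem_filter.1 hj).1 (mem_filter.1 hj).2
    · intro j hj
      obtain ⟨hjs, hji⟩ := mem_filter.1 hj
      have := hsparse j hjs (by rintro rfl; exact lt_irrefl _ hji)
      omega
  have habove : 2 ^ (ind i + w) ∣ ∑ j ∈ above, v j * 2 ^ ind j := by
    refine dvd_sum fun j hj => Dvd.dvd.mul_left (pow_dvd_pow 2 ?_) _
    obtain ⟨hji, hj⟩ := mem_erase.1 hj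
    have := hsparse j (mem_filter.1 hj).1 hji
    have := (mem_filter.1 hj).2
    omega
  rw [hsum, shiftRight_and_two_pow_sub_one hbelow habove]

theorem add_lt_two_pow_of_lt_two_pow_pred {a b w : ℕ} (ha : a < 2 ^ (w - 1)) (hb : b < 2 ^ (w - 1)) :
    a + b < 2 ^ w := by
  rcases w with _ | w
  · simp_all
  · rw [Nat.add_sub_cancel] at ha hb
    rw [pow_succ]
    omega

theorem mapElementwiseAdd_general (w h : ℕ) (ind : Fin h → ℕ)
    (hgap : ∀ i j : Fin h, i < j → ind i + w ≤ ind j)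
    (k k' : Fin h → ℕ) (hk : ∀ i, k i < 2 ^ (w - 1)) (hk' : ∀ i, k' i < 2 ^ (w - 1)) :
    (∀ i : Fin h,
      (((∑ j : Fin h, k j <<< ind j) + (∑ j : Fin h, k' j <<< ind j)) >>> ind i)
        &&& (2 ^ w - 1) = (k i + k' i) % 2 ^ w) ∧
    (∑ j : Fin h, k j <<< ind j) + (∑ j : Fin h, k' j <<< ind j)
      = ∑ j : Fin h, (k j + k' j) <<< ind j := by
  have hadd : (∑ j : Fin h, k j <<< ind j) + (∑ j : Fin h, k' j <<< ind j)
      = ∑ j : Fin h, (k j + k' j) <<< ind j := by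
    simp only [Nat.shiftLeft_eq, add_mul, sum_add_distrib]
  have hsparse : SparseOn w ind (univ : Finset (Fin h)) := fun i _ j _ hij =>
    hij.lt_or_gt.imp (hgap i j) (hgap j i)
  refine ⟨fun i => ?_, hadd⟩
  rw [hadd]
  exact sum_shiftLeft_shiftRight_and hsparse (mem_univ i)
    fun j _ _ => add_lt_two_pow_of_lt_two_pow_pred (hk j) (hk' j)

/-- Element-wise addition of maps with flag bits clear does not interfere
across elements: the sum decodes at each index to `(k i + k' i) % 2^w`
(which, as `k i, k' i < 2^(w-1)`, is just `k i + k' i`), and the encoded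
sum is the encoding of the element-wise sums. -/
theorem mapElementwiseAdd (w h : ℕ) (hw : 2 ≤ w) (ind : Fin h → ℕ)
    (hgap : ∀ i j : Fin h, i < j → ind i + w ≤ ind j)
    (k k' : Fin h → ℕ) (hk : ∀ i, k i < 2 ^ (w - 1)) (hk' : ∀ i, k' i < 2 ^ (w - 1)) :
    (∀ i : Fin h,
      (((∑ j : Fin h, k j <<< ind j) + (∑ j : Fin h, k' j <<< ind j)) >>> ind i)
        &&& (2 ^ w - 1) = (k i + k' i) % 2 ^ w) ∧
    (∑ j : Fin h, k j <<< ind j) + (∑ j : Fin h, k' j <<< ind j)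
      = ∑ j : Fin h, (k j + k' j) <<< ind j :=
  mapElementwiseAdd_general w h ind hgap k k' hk hk'
end

section
/- Let I be w-sparse with 1-bits at positions ind_1 < ... < ind_h, and let V = Σ_i k_i <<< ind_i, U = Σ_i k'_i <<< ind_i with k_i, k'_i < 2^w. Define NEG(U,I,w) = MASK(I,w) - U where MASK(I,w) = (I <<< w) - I. Then NEG(U,I,w) = Σ_i (2^w - 1 - k'_i) <<< ind_i; i.e., NEG computes the element-wise bitwise complement within w bits. -/
/-- `NEG` computes the element-wise bitwise complement within `w` bits:
`MASK(I,w) - U = Σ_i (2^w - 1 - k'_i) <<< ind_i`, where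
`I = Σ_i 2^(ind i)` and `MASK(I,w) = (I <<< w) - I`. -/
theorem mapElementwiseNeg (w h : ℕ) (hw : 1 ≤ w) (ind : Fin h → ℕ)
    (hgap : ∀ i j : Fin h, i < j → ind i + w ≤ ind j)
    (k' : Fin h → ℕ) (hk' : ∀ i, k' i < 2 ^ w) :
    (((∑ j : Fin h, 2 ^ ind j) <<< w) - (∑ j : Fin h, 2 ^ ind j))
        - (∑ j : Fin h, k' j <<< ind j)
      = ∑ j : Fin h, (2 ^ w - 1 - k' j) <<< ind j := by
  simp only [Nat.shiftLeft_eq]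
  have key : (∑ j : Fin h, 2 ^ ind j) * 2 ^ w
      = (∑ j : Fin h, (2 ^ w - 1 - k' j) * 2 ^ ind j)
        + (∑ j : Fin h, k' j * 2 ^ ind j) + ∑ j : Fin h, 2 ^ ind j := by
    rw [Finset.sum_mul, ← Finset.sum_add_distrib, ← Finset.sum_add_distrib]
    refine Finset.sum_congr rfl fun j _ => ?_
    have hK : (2 ^ w - 1 - k' j) + k' j + 1 = 2 ^ w := by
      have := hk' j; omega
    calc 2 ^ ind j * 2 ^ w = 2 ^ ind j * ((2 ^ w - 1 - k' j) + k' j + 1) := by rw [hK]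
      _ = (2 ^ w - 1 - k' j) * 2 ^ ind j + k' j * 2 ^ ind j + 2 ^ ind j := by ring
  omega
end

section
/- For x ≥ 0 and n ≥ 2, ˣ(2^n) ≤ ˣ(n^n) ≤ ^{2x}n; i.e., the tower of height x with base 2^n is at most the tower of height 2x with base n. -/
/-- Generalized tetration: `tet b 0 = 1`, `tet b (x+1) = b ^ tet b x`. -/
def tet (b : ℕ) : ℕ → ℕ
  | 0 => 1
  | x + 1 => b ^ tet b x

lemma tet_pos {b : ℕ} (hb : 1 ≤ b) : ∀ x, 1 ≤ tet b x
  | 0 => le_refl _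
  | x + 1 => Nat.one_le_pow _ _ hb

lemma tet_mono_base {a b : ℕ} (ha : 1 ≤ a) (h : a ≤ b) : ∀ x, tet a x ≤ tet b x
  | 0 => le_refl _
  | x + 1 => by
    simp only [tet]
    calc a ^ tet a x ≤ b ^ tet a x := Nat.pow_le_pow_left h _
      _ ≤ b ^ tet b x := Nat.pow_le_pow_right (by omega) (tet_mono_base ha h x)

lemma mul_le_pow_self {n : ℕ} (hn : 2 ≤ n) : ∀ t, 1 ≤ t → n * t ≤ n ^ t
  | 1, _ => by simp
  | t + 2, _ => by
    obtain ⟨m, rfl⟩ : ∃ m, n = m + 2 := ⟨n - 2, by omega⟩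
    have ih := mul_le_pow_self hn (t + 1) (Nat.le_add_left _ _)
    have h1 : m + 2 ≤ (m + 2) ^ (t + 1) * (m + 1) :=
      calc m + 2 ≤ (m + 2) ^ (t + 1) := Nat.le_self_pow (by omega) _
        _ = (m + 2) ^ (t + 1) * 1 := by ring
        _ ≤ (m + 2) ^ (t + 1) * (m + 1) := Nat.mul_le_mul_left _ (by omega)
    have h2 : (m + 2) ^ (t + 2) = (m + 2) ^ (t + 1) + (m + 2) ^ (t + 1) * (m + 1) := by
      ring
    have h3 : (m + 2) * (t + 2) = (m + 2) * (t + 1) + (m + 2) := by ring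
    omega

theorem tetration_base_change (n : ℕ) (hn : 2 ≤ n) (x : ℕ) :
    tet (2 ^ n) x ≤ tet (n ^ n) x ∧ tet (n ^ n) x ≤ tet n (2 * x) := by
  have h1 : (2:ℕ) ^ n ≤ n ^ n := Nat.pow_le_pow_left hn n
  refine ⟨tet_mono_base (Nat.one_le_two_pow) h1 x, ?_⟩
  induction x with
  | zero => simp [tet]
  | succ x ih =>
    have h2x : 2 * (x + 1) = (2 * x + 1) + 1 := by ring
    rw [h2x]
    show (n ^ n) ^ tet (n ^ n) x ≤ n ^ tet n (2 * x + 1)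
    rw [← Nat.pow_mul]
    apply Nat.pow_le_pow_right (by omega)
    show n * tet (n ^ n) x ≤ n ^ tet n (2 * x)
    calc n * tet (n ^ n) x ≤ n * tet n (2 * x) :=
          Nat.mul_le_mul_left _ ih
      _ ≤ n ^ tet n (2 * x) := mul_le_pow_self hn _ (tet_pos (by omega) _)
end

section
/- Let I be w-sparse with 1-bits at positions ind_1 < ... < ind_h, and V = Σ_i k_i <<< ind_i, U = Σ_i k'_i <<< ind_i with k_i, k'_i < 2^{w-1} (flag bits clear). Define GT(V,U,I,w) = carry-extraction as in the paper; then the result equals Σ_i c_i <<< ind_i where c_i = 1 if k_i > k'_i and c_i = 0 otherwise. Consequently EQ(V,U,I,w) := I - GT(V,U,I,w) - GT(U,V,I,w) equals Σ_i e_i <<< ind_i where e_i = 1 iff k_i = k'_i. -/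
/-- `MASK(I,w) = (I <<< w) - I`. -/
def MASKm (I w : ℕ) : ℕ := (I <<< w) - I

/-- Positions of the flag bits (MSB of each element). -/
def FLAGSd (I w : ℕ) : ℕ := I <<< (w - 1)

/-- Positions of the data bits (lowest `w-1` bits of each element). -/
def DATAd (I w : ℕ) : ℕ := FLAGSd I w - I

def FLAGSm (V I w : ℕ) : ℕ := V &&& FLAGSd I w

def DATAm (V I w : ℕ) : ℕ := V &&& DATAd I w

/-- Element-wise sum modulo `2^w`. -/
def ADDm (V U I w : ℕ) : ℕ :=
  (DATAm V I w + DATAm U I w) ^^^ FLAGSm V I w ^^^ FLAGSm U I w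

/-- Element-wise carry bits of `V + U` at width `w`. -/
def CARRYm (V U I w : ℕ) : ℕ := (V + U - ADDm V U I w) >>> w

/-- Element-wise bitwise complement within `w` bits. -/
def NEGm (U I w : ℕ) : ℕ := MASKm I w - U

/-- Element-wise "greater than" via carry extraction. -/
def GTm (V U I w : ℕ) : ℕ := CARRYm V (NEGm U I w) I w

/-- Element-wise equality test. -/
def EQm (V U I w : ℕ) : ℕ := I - GTm V U I w - GTm U V I w

/-!
Everything acts independently on the `w`-bit blocks at the positions `ind j`. Sums, and
differences whose subtrahend is blockwise smaller, of packed words never carry from one block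
into the next, since every block value stays below `2 ^ w`; bitwise operations are blockwise
anyway. Within a block,
adding the low `w - 1` bits cannot overflow, and xoring in the two flag bits then adds them
modulo `2 ^ w`, so `ADD` is blockwise addition modulo `2 ^ w` and `V + U - ADD` consists of the
carries shifted up by `w`. With `2 ^ w - 1 - k'` as second summand the carry is set exactly when
`k' < k`, and `1 - [k' < k] - [k < k'] = [k = k']` gives `EQ`.
-/

namespace Nat

theorem bitwise_two_pow_mul_add {f : Bool → Bool → Bool} (hf : f false false = false)
    {n r s : ℕ} (q t : ℕ) (hr : r < 2 ^ n) (hs : s < 2 ^ n) :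
    bitwise f (2 ^ n * q + r) (2 ^ n * t + s) = 2 ^ n * bitwise f q t + bitwise f r s := by
  have hpos : 0 < 2 ^ n := Nat.two_pow_pos n
  rw [← Nat.div_add_mod (bitwise f _ _) (2 ^ n), bitwise_div_two_pow hf, bitwise_mod_two_pow hf,
    Nat.mul_add_div hpos, Nat.mul_add_div hpos, Nat.mul_add_mod, Nat.mul_add_mod,
    Nat.div_eq_of_lt hr, Nat.div_eq_of_lt hs, Nat.mod_eq_of_lt hr, Nat.mod_eq_of_lt hs,
    add_zero, add_zero]

theorem xor_two_pow_mul_add {n r s : ℕ} (q t : ℕ) (hr : r < 2 ^ n) (hs : s < 2 ^ n) :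
    (2 ^ n * q + r) ^^^ (2 ^ n * t + s) = 2 ^ n * (q ^^^ t) + (r ^^^ s) :=
  bitwise_two_pow_mul_add rfl q t hr hs

theorem xor_two_pow_eq_add_mod {m s : ℕ} (hs : s < 2 ^ (m + 1)) :
    s ^^^ 2 ^ m = (s + 2 ^ m) % 2 ^ (m + 1) := by
  have hpos : 0 < 2 ^ m := Nat.two_pow_pos m
  rw [pow_succ] at hs ⊢
  rcases lt_or_ge s (2 ^ m) with hlt | hge
  · have := xor_two_pow_mul_add 0 1 hlt hpos
    simp only [mul_zero, zero_add, mul_one, add_zero, Nat.xor_zero, Nat.zero_xor] at this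
    rw [this, Nat.mod_eq_of_lt (by omega), add_comm]
  · have := xor_two_pow_mul_add 1 1 (show s - 2 ^ m < 2 ^ m by omega) hpos
    simp only [mul_one, add_zero, Nat.xor_self, Nat.xor_zero, Nat.add_sub_cancel' hge] at this
    rw [this, show s + 2 ^ m = s - 2 ^ m + 2 ^ m * 2 by omega, Nat.add_mod_right,
      Nat.mod_eq_of_lt (by omega), mul_zero, zero_add]

theorem and_two_pow_add_mod_two_pow {m a : ℕ} (ha : a < 2 ^ (m + 1)) :
    (a &&& 2 ^ m) + a % 2 ^ m = a := by
  have hq : a / 2 ^ m < 2 := Nat.div_lt_of_lt_mul (by rwa [pow_succ] at ha)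
  rw [and_two_pow, testBit_eq_decide_div_mod_eq]
  conv_rhs => rw [← Nat.div_add_mod a (2 ^ m)]
  interval_cases a / 2 ^ m <;> simp

theorem xor_and_two_pow_eq_add_mod (a : ℕ) {m s : ℕ} (hs : s < 2 ^ (m + 1)) :
    s ^^^ (a &&& 2 ^ m) = (s + (a &&& 2 ^ m)) % 2 ^ (m + 1) := by
  rw [and_two_pow]
  cases a.testBit m
  · simp [Nat.mod_eq_of_lt hs]
  · simpa using xor_two_pow_eq_add_mod hs

theorem add_mod_two_pow_eq_xor {m a b : ℕ} (ha : a < 2 ^ (m + 1)) (hb : b < 2 ^ (m + 1)) :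
    ((a &&& 2 ^ m - 1) + (b &&& 2 ^ m - 1)) ^^^ (a &&& 2 ^ m) ^^^ (b &&& 2 ^ m)
      = (a + b) % 2 ^ (m + 1) := by
  have hs : a % 2 ^ m + b % 2 ^ m < 2 ^ (m + 1) := by
    have := Nat.mod_lt a (Nat.two_pow_pos m)
    have := Nat.mod_lt b (Nat.two_pow_pos m)
    rw [pow_succ]
    omega
  rw [and_two_pow_sub_one_eq_mod, and_two_pow_sub_one_eq_mod, xor_and_two_pow_eq_add_mod a hs,
    xor_and_two_pow_eq_add_mod b (Nat.mod_lt _ (Nat.two_pow_pos _)), Nat.mod_add_mod]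
  have ha' := and_two_pow_add_mod_two_pow ha
  have hb' := and_two_pow_add_mod_two_pow hb
  congr 1
  omega

theorem add_two_pow_sub_one_sub_div_two_pow {w a b : ℕ} (ha : a < 2 ^ w) (hb : b < 2 ^ w) :
    (a + (2 ^ w - 1 - b)) / 2 ^ w = if b < a then 1 else 0 := by
  split_ifs with hba
  · exact Nat.div_eq_of_lt_le (by omega) (by omega)
  · exact Nat.div_eq_of_lt (by omega)

section

variable {h : ℕ} {ind : Fin h → ℕ}

theorem sum_shiftLeft_add_sum_shiftLeft (a b : Fin h → ℕ) :
    ∑ j, a j <<< ind j + ∑ j, b j <<< ind j = ∑ j, (a j + b j) <<< ind j := by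
  simp only [shiftLeft_eq, ← Finset.sum_add_distrib, add_mul]

theorem sum_shiftLeft_sub_sum_shiftLeft {a b : Fin h → ℕ} (hba : ∀ j, b j ≤ a j) :
    ∑ j, a j <<< ind j - ∑ j, b j <<< ind j = ∑ j, (a j - b j) <<< ind j := by
  rw [Nat.sub_eq_iff_eq_add (Finset.sum_le_sum fun j _ => by
      simpa only [shiftLeft_eq] using Nat.mul_le_mul_right _ (hba j)),
    sum_shiftLeft_add_sum_shiftLeft]
  simp only [Nat.sub_add_cancel (hba _)]

theorem sum_shiftLeft_shiftLeft (a : Fin h → ℕ) (n : ℕ) :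
    (∑ j, a j <<< ind j) <<< n = ∑ j, (a j <<< n) <<< ind j := by
  simp only [shiftLeft_eq, Finset.sum_mul]
  exact Finset.sum_congr rfl fun j _ => by ring

theorem sum_two_pow_eq_sum_one_shiftLeft :
    ∑ j, 2 ^ ind j = ∑ j, 1 <<< ind j := by
  simp only [one_shiftLeft]

theorem sum_two_pow_shiftLeft (n : ℕ) : (∑ j, 2 ^ ind j) <<< n = ∑ j, 2 ^ n <<< ind j := by
  simp only [sum_two_pow_eq_sum_one_shiftLeft, sum_shiftLeft_shiftLeft, one_shiftLeft]

theorem sum_shiftLeft_fin_succ {a ind : Fin (h + 1) → ℕ} {n : ℕ}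
    (hn : ∀ j : Fin h, n ≤ ind j.succ) :
    ∑ j, a j <<< ind j
      = 2 ^ n * ∑ j : Fin h, a j.succ <<< (ind j.succ - n) + a 0 <<< ind 0 := by
  rw [Fin.sum_univ_succ, add_comm, Finset.mul_sum]
  congr 1
  refine Finset.sum_congr rfl fun j _ => ?_
  rw [shiftLeft_eq, shiftLeft_eq, ← Nat.sub_add_cancel (hn j), pow_add, Nat.add_sub_cancel]
  ring

theorem bitwise_sum_shiftLeft {f : Bool → Bool → Bool} (hf : f false false = false) {w : ℕ}
    (hind : ∀ i j : Fin h, i < j → ind i + w ≤ ind j)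
    {a b : Fin h → ℕ} (ha : ∀ j, a j < 2 ^ w) (hb : ∀ j, b j < 2 ^ w) :
    bitwise f (∑ j, a j <<< ind j) (∑ j, b j <<< ind j)
      = ∑ j, bitwise f (a j) (b j) <<< ind j := by
  induction h with
  | zero => simp
  | succ h ih =>
    have hn : ∀ j : Fin h, ind 0 + w ≤ ind j.succ := fun j => hind 0 j.succ j.succ_pos
    have hlow : ∀ c < 2 ^ w, c <<< ind 0 < 2 ^ (ind 0 + w) := fun c hc => by
      rw [shiftLeft_eq, pow_add, mul_comm (2 ^ ind 0)]
      exact Nat.mul_lt_mul_of_pos_right hc (Nat.two_pow_pos _)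
    have hind' : ∀ i j : Fin h, i < j →
        ind i.succ - (ind 0 + w) + w ≤ ind j.succ - (ind 0 + w) := fun i j hij => by
      have := hind i.succ j.succ (Fin.succ_lt_succ_iff.mpr hij)
      have := hn i
      omega
    rw [sum_shiftLeft_fin_succ hn, sum_shiftLeft_fin_succ hn, sum_shiftLeft_fin_succ hn,
      bitwise_two_pow_mul_add hf _ _ (hlow _ (ha 0)) (hlow _ (hb 0)),
      ih hind' (fun j => ha j.succ) (fun j => hb j.succ), shiftLeft_bitwise_distrib hf]

theorem land_sum_shiftLeft {w : ℕ} (hind : ∀ i j : Fin h, i < j → ind i + w ≤ ind j)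
    {a b : Fin h → ℕ} (ha : ∀ j, a j < 2 ^ w) (hb : ∀ j, b j < 2 ^ w) :
    (∑ j, a j <<< ind j) &&& (∑ j, b j <<< ind j) = ∑ j, (a j &&& b j) <<< ind j :=
  bitwise_sum_shiftLeft rfl hind ha hb

theorem xor_sum_shiftLeft {w : ℕ} (hind : ∀ i j : Fin h, i < j → ind i + w ≤ ind j)
    {a b : Fin h → ℕ} (ha : ∀ j, a j < 2 ^ w) (hb : ∀ j, b j < 2 ^ w) :
    (∑ j, a j <<< ind j) ^^^ (∑ j, b j <<< ind j) = ∑ j, (a j ^^^ b j) <<< ind j :=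
  bitwise_sum_shiftLeft rfl hind ha hb

end

end Nat

section

open Nat

variable {h : ℕ} {ind : Fin h → ℕ}

theorem MASKm_sum_two_pow (w : ℕ) :
    MASKm (∑ j, 2 ^ ind j) w = ∑ j, (2 ^ w - 1) <<< ind j := by
  rw [MASKm, sum_two_pow_shiftLeft, sum_two_pow_eq_sum_one_shiftLeft,
    sum_shiftLeft_sub_sum_shiftLeft fun _ => Nat.one_le_two_pow]

theorem FLAGSd_sum_two_pow (w : ℕ) : FLAGSd (∑ j, 2 ^ ind j) w = ∑ j, 2 ^ (w - 1) <<< ind j :=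
  sum_two_pow_shiftLeft (w - 1)

theorem DATAd_sum_two_pow (w : ℕ) :
    DATAd (∑ j, 2 ^ ind j) w = ∑ j, (2 ^ (w - 1) - 1) <<< ind j := by
  rw [DATAd, FLAGSd_sum_two_pow, sum_two_pow_eq_sum_one_shiftLeft,
    sum_shiftLeft_sub_sum_shiftLeft fun _ => Nat.one_le_two_pow]

theorem NEGm_sum_shiftLeft {w : ℕ} {b : Fin h → ℕ} (hb : ∀ j, b j < 2 ^ w) :
    NEGm (∑ j, b j <<< ind j) (∑ j, 2 ^ ind j) w = ∑ j, (2 ^ w - 1 - b j) <<< ind j := by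
  rw [NEGm, MASKm_sum_two_pow, sum_shiftLeft_sub_sum_shiftLeft fun j => by have := hb j; omega]

theorem ADDm_sum_shiftLeft {w : ℕ} (hw : 0 < w)
    (hind : ∀ i j : Fin h, i < j → ind i + w ≤ ind j)
    {a b : Fin h → ℕ} (ha : ∀ j, a j < 2 ^ w) (hb : ∀ j, b j < 2 ^ w) :
    ADDm (∑ j, a j <<< ind j) (∑ j, b j <<< ind j) (∑ j, 2 ^ ind j) w
      = ∑ j, ((a j + b j) % 2 ^ w) <<< ind j := by
  obtain ⟨m, rfl⟩ : ∃ m, w = m + 1 := ⟨w - 1, by omega⟩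
  have hflag : ∀ _ : Fin h, 2 ^ m < 2 ^ (m + 1) := fun _ => Nat.pow_lt_pow_succ one_lt_two
  have hdata : ∀ _ : Fin h, 2 ^ m - 1 < 2 ^ (m + 1) := fun j => by have := hflag j; omega
  have hsum : ∀ j, (a j &&& 2 ^ m - 1) + (b j &&& 2 ^ m - 1) < 2 ^ (m + 1) := fun j => by
    have := Nat.mod_lt (a j) (Nat.two_pow_pos m)
    have := Nat.mod_lt (b j) (Nat.two_pow_pos m)
    rw [and_two_pow_sub_one_eq_mod, and_two_pow_sub_one_eq_mod, pow_succ]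
    omega
  rw [ADDm, DATAm, DATAm, FLAGSm, FLAGSm, DATAd_sum_two_pow, FLAGSd_sum_two_pow,
    add_tsub_cancel_right, land_sum_shiftLeft hind ha hdata, land_sum_shiftLeft hind hb hdata,
    land_sum_shiftLeft hind ha hflag, land_sum_shiftLeft hind hb hflag,
    sum_shiftLeft_add_sum_shiftLeft,
    xor_sum_shiftLeft hind hsum fun j => and_lt_two_pow _ (hflag j),
    xor_sum_shiftLeft hind (fun j => xor_lt_two_pow (hsum j) (and_lt_two_pow _ (hflag j)))
      fun j => and_lt_two_pow _ (hflag j)]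
  simp only [add_mod_two_pow_eq_xor (ha _) (hb _)]

theorem CARRYm_sum_shiftLeft {w : ℕ} (hw : 0 < w)
    (hind : ∀ i j : Fin h, i < j → ind i + w ≤ ind j)
    {a b : Fin h → ℕ} (ha : ∀ j, a j < 2 ^ w) (hb : ∀ j, b j < 2 ^ w) :
    CARRYm (∑ j, a j <<< ind j) (∑ j, b j <<< ind j) (∑ j, 2 ^ ind j) w
      = ∑ j, ((a j + b j) / 2 ^ w) <<< ind j := by
  rw [CARRYm, ADDm_sum_shiftLeft hw hind ha hb, sum_shiftLeft_add_sum_shiftLeft,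
    sum_shiftLeft_sub_sum_shiftLeft fun j => Nat.mod_le _ _]
  simp only [← Nat.div_mul_self_eq_mod_sub_self, ← shiftLeft_eq, ← sum_shiftLeft_shiftLeft,
    shiftLeft_shiftRight]

theorem GTm_sum_shiftLeft {w : ℕ} (hw : 0 < w)
    (hind : ∀ i j : Fin h, i < j → ind i + w ≤ ind j)
    {a b : Fin h → ℕ} (ha : ∀ j, a j < 2 ^ w) (hb : ∀ j, b j < 2 ^ w) :
    GTm (∑ j, a j <<< ind j) (∑ j, b j <<< ind j) (∑ j, 2 ^ ind j) w
      = ∑ j, (if b j < a j then 1 else 0) <<< ind j := by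
  rw [GTm, NEGm_sum_shiftLeft hb, CARRYm_sum_shiftLeft hw hind ha fun j => by have := hb j; omega]
  simp only [add_two_pow_sub_one_sub_div_two_pow (ha _) (hb _)]

theorem EQm_sum_shiftLeft {w : ℕ} (hw : 0 < w)
    (hind : ∀ i j : Fin h, i < j → ind i + w ≤ ind j)
    {a b : Fin h → ℕ} (ha : ∀ j, a j < 2 ^ w) (hb : ∀ j, b j < 2 ^ w) :
    EQm (∑ j, a j <<< ind j) (∑ j, b j <<< ind j) (∑ j, 2 ^ ind j) w
      = ∑ j, (if a j = b j then 1 else 0) <<< ind j := by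
  rw [EQm, GTm_sum_shiftLeft hw hind ha hb, GTm_sum_shiftLeft hw hind hb ha,
    sum_two_pow_eq_sum_one_shiftLeft,
    sum_shiftLeft_sub_sum_shiftLeft fun j => by split_ifs <;> omega,
    sum_shiftLeft_sub_sum_shiftLeft fun j => by split_ifs <;> omega]
  refine Finset.sum_congr rfl fun j _ => congrArg (· <<< ind j) ?_
  split_ifs <;> omega

end

theorem map_gt_eq (w h : ℕ) (hw : 2 ≤ w) (ind : Fin h → ℕ)
    (hgap : ∀ i j : Fin h, i < j → ind i + w ≤ ind j)
    (k k' : Fin h → ℕ) (hk : ∀ i, k i < 2 ^ (w - 1)) (hk' : ∀ i, k' i < 2 ^ (w - 1)) :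
    GTm (∑ j : Fin h, k j <<< ind j) (∑ j : Fin h, k' j <<< ind j)
        (∑ j : Fin h, 2 ^ ind j) w
      = ∑ j : Fin h, (if k' j < k j then 1 else 0) <<< ind j ∧
    EQm (∑ j : Fin h, k j <<< ind j) (∑ j : Fin h, k' j <<< ind j)
        (∑ j : Fin h, 2 ^ ind j) w
      = ∑ j : Fin h, (if k j = k' j then 1 else 0) <<< ind j := by
  have hsmall : ∀ {n}, n < 2 ^ (w - 1) → n < 2 ^ w := fun hn =>
    hn.trans_le (Nat.pow_le_pow_right two_pos (Nat.sub_le w 1))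
  exact ⟨GTm_sum_shiftLeft (by omega) hgap (hsmall <| hk ·) (hsmall <| hk' ·),
    EQm_sum_shiftLeft (by omega) hgap (hsmall <| hk ·) (hsmall <| hk' ·)⟩
end
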